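/- Let F be an r-sort species admitting a composition operator Η. Then for all nonnegative integers k and ℓ with k ≠ ℓ and every r-tuple Ω of finite sets, the sets F_Η^(k)[Ω] and F_Η^(ℓ)[Ω] are disjoint: F_Η^(k)[Ω] ∩ F_Η^(ℓ)[Ω] = ∅. -/

import Mathlib

/-!
Call `C ⊆ Ω` a split of `x ∈ F[Ω]` if `x ∈ η(F[C] × F[Ω - C])`. By Axiom (D1), `C` is a split
of `η(p, q)` exactly when its traces on the two factors are splits of `p` and of `q`, and an
indecomposable `p ∈ F_Η[A]` has only the trivial splits `∅` and `A`. Hence, if `x ∈ F_Η^(k)[Ω]`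
is built from indecomposables on `A₁, …, A_k`, its splits are the unions of subfamilies of the
`Aᵢ`: there are `2^k` of them, so `k` is determined by `x`.
-/

open scoped Classical

noncomputable section

/-- Objects of `Set^r`: `r`-tuples of finite sets (realized as finite subsets of `ℕ`). -/
abbrev Obj (r : ℕ) := Fin r → Finset ℕ

variable {r : ℕ}

/-- The `r`-tuple of empty sets. -/
def oEmpty (r : ℕ) : Obj r := fun _ => ∅

/-- Componentwise union (the disjoint union `⨿` when the arguments are
componentwise disjoint). -/
def oUnion (Ω₁ Ω₂ : Obj r) : Obj r := fun i => Ω₁ i ∪ Ω₂ i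

/-- Componentwise intersection. -/
def oInter (Ω₁ Ω₂ : Obj r) : Obj r := fun i => Ω₁ i ∩ Ω₂ i

/-- Componentwise set difference. -/
def oDiff (Ω₁ Ω₂ : Obj r) : Obj r := fun i => Ω₁ i \ Ω₂ i

/-- Componentwise disjointness. -/
def oDisj (Ω₁ Ω₂ : Obj r) : Prop := ∀ i, Disjoint (Ω₁ i) (Ω₂ i)

/-- Componentwise containment. -/
def oSub (Ω₁ Ω₂ : Obj r) : Prop := ∀ i, Ω₁ i ⊆ Ω₂ i

/-- A morphism of `Set^r`: an `r`-tuple of bijections between the components. -/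
def Mor (Ω₁ Ω₂ : Obj r) : Type := ∀ i, {x // x ∈ Ω₁ i} ≃ {x // x ∈ Ω₂ i}

/-- The identity morphism. -/
def idMor (Ω : Obj r) : Mor Ω Ω := fun _ => Equiv.refl _

/-- Composition of morphisms. -/
def compMor {Ω₁ Ω₂ Ω₃ : Obj r} (f : Mor Ω₁ Ω₂) (g : Mor Ω₂ Ω₃) : Mor Ω₁ Ω₃ :=
  fun i => (f i).trans (g i)

/-- An `r`-sort species: a (covariant) functor from `Set^r` to the category of
finite sets and bijections.  The value `F[Ω]` is the finite set `obj Ω`, and the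
action on a morphism `f` is encoded by the function `map f : ℕ → ℕ` (only its
values on `obj Ω₁` are relevant). -/
structure Species (r : ℕ) where
  obj : Obj r → Finset ℕ
  map : ∀ {Ω₁ Ω₂ : Obj r}, Mor Ω₁ Ω₂ → ℕ → ℕ
  map_mem : ∀ {Ω₁ Ω₂ : Obj r} (f : Mor Ω₁ Ω₂), ∀ x ∈ obj Ω₁, map f x ∈ obj Ω₂
  map_id : ∀ (Ω : Obj r), ∀ x ∈ obj Ω, map (idMor Ω) x = x
  map_comp : ∀ {Ω₁ Ω₂ Ω₃ : Obj r} (f : Mor Ω₁ Ω₂) (g : Mor Ω₂ Ω₃), ∀ x ∈ obj Ω₁,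
    map (compMor f g) x = map g (map f x)

/-- The canonical identification of a disjoint union `s ∪ t` with the sum `s ⊕ t`. -/
def finsetSumEquiv {s t : Finset ℕ} (h : Disjoint s t) :
    {x // x ∈ s ∪ t} ≃ {x // x ∈ s} ⊕ {x // x ∈ t} :=
  (Equiv.subtypeEquivRight (fun x => by simp)).trans
    (Equiv.Set.union (s := (↑s : Set ℕ)) (t := (↑t : Set ℕ)) (by exact_mod_cast h))

/-- The disjoint union of two bijections, as a bijection between unions. -/
def finsetUnionEquiv {s t s' t' : Finset ℕ} (h : Disjoint s t) (h' : Disjoint s' t')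
    (f : {x // x ∈ s} ≃ {x // x ∈ s'}) (g : {x // x ∈ t} ≃ {x // x ∈ t'}) :
    {x // x ∈ s ∪ t} ≃ {x // x ∈ s' ∪ t'} :=
  (finsetSumEquiv h).trans ((f.sumCongr g).trans (finsetSumEquiv h').symm)

/-- The disjoint union `f ⨿ g` of two morphisms of `Set^r`. -/
def morUnion {Ω₁ Ω₂ Ω₁' Ω₂' : Obj r} (h : oDisj Ω₁ Ω₂) (h' : oDisj Ω₁' Ω₂')
    (f : Mor Ω₁ Ω₁') (g : Mor Ω₂ Ω₂') : Mor (oUnion Ω₁ Ω₂) (oUnion Ω₁' Ω₂') :=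
  fun i => finsetUnionEquiv (h i) (h' i) (f i) (g i)

/-- A composition operator `Η` for the species `F`: a natural transformation from
`F × F` (on pairs of componentwise disjoint objects) to `F ∘ ⨿` with injective
components, satisfying Axiom (D1). -/
structure CompOp {r : ℕ} (F : Species r) where
  η : Obj r → Obj r → ℕ × ℕ → ℕ
  mem_η : ∀ {Ω₁ Ω₂ : Obj r}, oDisj Ω₁ Ω₂ → ∀ x ∈ F.obj Ω₁, ∀ y ∈ F.obj Ω₂,
    η Ω₁ Ω₂ (x, y) ∈ F.obj (oUnion Ω₁ Ω₂)
  inj_η : ∀ {Ω₁ Ω₂ : Obj r}, oDisj Ω₁ Ω₂ →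
    Set.InjOn (η Ω₁ Ω₂) ((F.obj Ω₁ : Set ℕ) ×ˢ (F.obj Ω₂ : Set ℕ))
  natural : ∀ {Ω₁ Ω₂ Ω₁' Ω₂' : Obj r} (h : oDisj Ω₁ Ω₂) (h' : oDisj Ω₁' Ω₂')
    (f : Mor Ω₁ Ω₁') (g : Mor Ω₂ Ω₂'), ∀ x ∈ F.obj Ω₁, ∀ y ∈ F.obj Ω₂,
    F.map (morUnion h h' f g) (η Ω₁ Ω₂ (x, y)) = η Ω₁' Ω₂' (F.map f x, F.map g y)
  D1 : ∀ {Ω₁ Ω₂ Ω₃ Ω₄ : Obj r}, oDisj Ω₁ Ω₂ → oDisj Ω₃ Ω₄ →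
    oUnion Ω₁ Ω₂ = oUnion Ω₃ Ω₄ →
    η Ω₁ Ω₂ '' ((F.obj Ω₁ : Set ℕ) ×ˢ (F.obj Ω₂ : Set ℕ)) ∩
      η Ω₃ Ω₄ '' ((F.obj Ω₃ : Set ℕ) ×ˢ (F.obj Ω₄ : Set ℕ)) =
    η Ω₁ Ω₂ ''
      ((η (oInter Ω₁ Ω₃) (oInter Ω₁ Ω₄) ''
          ((F.obj (oInter Ω₁ Ω₃) : Set ℕ) ×ˢ (F.obj (oInter Ω₁ Ω₄) : Set ℕ))) ×ˢ
        (η (oInter Ω₂ Ω₃) (oInter Ω₂ Ω₄) ''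
          ((F.obj (oInter Ω₂ Ω₃) : Set ℕ) ×ˢ (F.obj (oInter Ω₂ Ω₄) : Set ℕ))))

/-- The set `F_Η[Ω]` of indecomposable elements of `F[Ω]`. -/
def indec (F : Species r) (E : CompOp F) (Ω : Obj r) : Set ℕ :=
  if Ω = oEmpty r then ∅
  else (F.obj Ω : Set ℕ) \
    ⋃ (p : Obj r × Obj r) (_ : oDisj p.1 p.2) (_ : p.1 ≠ oEmpty r) (_ : p.2 ≠ oEmpty r)
      (_ : oUnion p.1 p.2 = Ω),
      E.η p.1 p.2 '' ((F.obj p.1 : Set ℕ) ×ˢ (F.obj p.2 : Set ℕ))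

/-- The sets `F_Η^(k)[Ω]` of elements of `F[Ω]` consisting of exactly `k`
indecomposable components. -/
def indecK (F : Species r) (E : CompOp F) : ℕ → Obj r → Set ℕ
  | 0 => fun Ω => if Ω = oEmpty r then (F.obj (oEmpty r) : Set ℕ) else ∅
  | (k + 1) => fun Ω => ⋃ (Ω₁ : Obj r) (_ : oSub Ω₁ Ω),
      E.η Ω₁ (oDiff Ω Ω₁) '' ((indec F E Ω₁) ×ˢ (indecK F E k (oDiff Ω Ω₁)))

/-- `Ω_I`: the componentwise disjoint union of the family `Ωs` over the index set `s`. -/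
def bigU {ι : Type} [DecidableEq ι] (Ωs : ι → Obj r) (s : Finset ι) : Obj r :=
  fun i => s.biUnion (fun j => Ωs j i)

/-- `Brack F E Ωs leaf s B` says that `B` is an `Η`-bracketing of the sets
`leaf (Ωs i)`, `i ∈ s` (each occurring exactly once).  For `leaf Ω = F[Ω]` this is an
`Η`-bracketing of the `F[Ωs i]`; for `leaf = indec F E` it is an `Η`-bracketing of
the `F_Η[Ωs i]`. -/
inductive Brack (F : Species r) (E : CompOp F) {ι : Type} [DecidableEq ι]
    (Ωs : ι → Obj r) (leaf : Obj r → Set ℕ) : Finset ι → Set ℕ → Prop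
  | single (i : ι) : Brack F E Ωs leaf {i} (leaf (Ωs i))
  | node {s t : Finset ι} {B₁ B₂ : Set ℕ} :
      Disjoint s t → s.Nonempty → t.Nonempty →
      Brack F E Ωs leaf s B₁ → Brack F E Ωs leaf t B₂ →
      Brack F E Ωs leaf (s ∪ t) (E.η (bigU Ωs s) (bigU Ωs t) '' (B₁ ×ˢ B₂))

/-- A `Λ`-weight on `(F, Η)`: Axioms (W0), (W1), (W2). -/
structure Weight {r : ℕ} (F : Species r) (E : CompOp F) (Λ : Type) [CommRing Λ]
    [Algebra ℚ Λ] where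
  w : Obj r → ℕ → Λ
  W0 : ∀ x ∈ F.obj (oEmpty r), w (oEmpty r) x = 1
  W1 : ∀ {Ω Ω' : Obj r} (f : Mor Ω Ω'), ∀ x ∈ F.obj Ω, w Ω' (F.map f x) = w Ω x
  W2 : ∀ {Ω₁ Ω₂ : Obj r}, oDisj Ω₁ Ω₂ → ∀ x ∈ indec F E Ω₁, ∀ y ∈ F.obj Ω₂,
    w (oUnion Ω₁ Ω₂) (E.η Ω₁ Ω₂ (x, y)) = w Ω₁ x * w Ω₂ y

/-- The standard object `([n₁], …, [n_r])`, with `[n] = {1, …, n}`. -/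
def stdObj {r : ℕ} (n : Fin r → ℕ) : Obj r := fun i => Finset.Icc 1 (n i)

/-- The exponential generating function
`Σ_{n₁,…,n_r ≥ 0} Σ_{x ∈ S[([n₁],…,[n_r])]} w(x) z₁^{n₁} ⋯ z_r^{n_r}/(n₁! ⋯ n_r!)`
of a subfamily `S` of a species `F`, with respect to a weight `w`. -/
def GF {r : ℕ} {Λ : Type} [CommRing Λ] [Algebra ℚ Λ] (F : Species r)
    (S : Obj r → Set ℕ) (w : Obj r → ℕ → Λ) : MvPowerSeries (Fin r) Λ :=
  fun d => (algebraMap ℚ Λ (∏ i, (1 / (Nat.factorial (d i)) : ℚ))) *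
    ∑ x ∈ (F.obj (stdObj fun i => d i)).filter (fun x => x ∈ S (stdObj fun i => d i)),
      w (stdObj fun i => d i) x

/-- The exponential `exp f = Σ_{k ≥ 0} f^k / k!` of a multivariate formal power
series `f` with zero constant term (the coefficient of a given monomial only
receives contributions from `k` at most the total degree). -/
def mvExp {σ Λ : Type} [CommRing Λ] [Algebra ℚ Λ] (f : MvPowerSeries σ Λ) :
    MvPowerSeries σ Λ :=
  fun d => ∑ k ∈ Finset.range ((d.sum fun _ m => m) + 1),
    algebraMap ℚ Λ ((1 : ℚ) / (Nat.factorial k)) * MvPowerSeries.coeff d (f ^ k)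

/-- The logarithm `log f = Σ_{k ≥ 1} (-1)^{k+1} (f-1)^k / k` of a multivariate
formal power series `f` with constant term `1`. -/
def mvLog {σ Λ : Type} [CommRing Λ] [Algebra ℚ Λ] (f : MvPowerSeries σ Λ) :
    MvPowerSeries σ Λ :=
  fun d => ∑ k ∈ Finset.Icc 1 (d.sum fun _ m => m),
    algebraMap ℚ Λ ((-1 : ℚ) ^ (k + 1) / k) * MvPowerSeries.coeff d ((f - 1) ^ k)

/-- The refined generating function `G̃F_F(z₁,…,z_r,y)`, a power series in
`z₁, …, z_r` with coefficients that are polynomials in `y` (recorded via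
`Polynomial Λ`, the variable `y` being `Polynomial.X`):
`Σ_{n₁,…,n_r ≥ 0} Σ_k Σ_{x ∈ F_Η^(k)[([n₁],…,[n_r])]} y^k w(x) z₁^{n₁}⋯z_r^{n_r}/(n₁!⋯n_r!)`
(for fixed `n₁, …, n_r` only the `k ≤ n₁ + ⋯ + n_r` contribute, since
`F_Η^(k)[Ω] = ∅ for k > ‖Ω‖`). -/
def tGF {r : ℕ} {Λ : Type} [CommRing Λ] [Algebra ℚ Λ] (F : Species r) (E : CompOp F)
    (w : Obj r → ℕ → Λ) : MvPowerSeries (Fin r) (Polynomial Λ) :=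
  fun d => Polynomial.C (algebraMap ℚ Λ (∏ i, (1 / (Nat.factorial (d i)) : ℚ))) *
    ∑ k ∈ Finset.range ((∑ i, d i) + 1), Polynomial.X ^ k *
      Polynomial.C (∑ x ∈ (F.obj (stdObj fun i => d i)).filter
          (fun x => x ∈ indecK F E k (stdObj fun i => d i)),
        w (stdObj fun i => d i) x)

/-- The species `E(F_Η)` of sets of `F_Η`-structures:  `E(F_Η)[Ω]` consists of all
finite sets `{(x₁,Ω₁),…,(x_k,Ω_k)}` with `x_i ∈ F_Η[Ω_i]`, the `Ω_i` nonempty and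
pairwise componentwise disjoint, and `Ω₁ ⨿ ⋯ ⨿ Ω_k = Ω`. -/
def ESet {r : ℕ} (F : Species r) (E : CompOp F) (Ω : Obj r) :
    Set (Finset (ℕ × Obj r)) :=
  { s | (∀ p ∈ s, p.1 ∈ indec F E p.2 ∧ p.2 ≠ oEmpty r) ∧
        (∀ p ∈ s, ∀ q ∈ s, p ≠ q → oDisj p.2 q.2) ∧
        (∀ i, Ω i = s.biUnion (fun p => p.2 i)) }

/-- The bijection between a finite set and its image under a map injective on it. -/
def imageEquiv {u : Finset ℕ} (g : ℕ → ℕ) (hg : Set.InjOn g (u : Set ℕ)) :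
    {x // x ∈ u} ≃ {x // x ∈ u.image g} :=
  Equiv.ofBijective (fun x => ⟨g x, Finset.mem_image_of_mem g x.2⟩) (by
    constructor
    · rintro ⟨a, ha⟩ ⟨b, hb⟩ hab
      exact Subtype.ext (hg (by exact_mod_cast ha) (by exact_mod_cast hb)
        (congrArg Subtype.val hab))
    · rintro ⟨y, hy⟩
      rcases Finset.mem_image.mp hy with ⟨a, ha, rfl⟩
      exact ⟨⟨a, ha⟩, rfl⟩)

/-- The underlying function `ℕ → ℕ` of the `i`-th component of a morphism. -/
def apMor {Ω Ω' : Obj r} (f : Mor Ω Ω') (i : Fin r) (a : ℕ) : ℕ :=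
  if h : a ∈ Ω i then ((f i) ⟨a, h⟩ : ℕ) else a

/-- The componentwise image of a subobject `O ⊆ Ω` under a morphism `f : Ω → Ω'`. -/
def oImage {Ω Ω' : Obj r} (f : Mor Ω Ω') (O : Obj r) : Obj r :=
  fun i => (O i).image (apMor f i)

/-- The restriction of a morphism `f : Ω → Ω'` to a subobject `O ⊆ Ω`. -/
def restrictMor {Ω Ω' : Obj r} (f : Mor Ω Ω') {O : Obj r} (hO : oSub O Ω) :
    Mor O (oImage f O) :=
  fun i => imageEquiv (apMor f i) (by
    intro a ha b hb hab
    have ha' : a ∈ Ω i := hO i (by exact_mod_cast ha)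
    have hb' : b ∈ Ω i := hO i (by exact_mod_cast hb)
    have h1 : ((f i) ⟨a, ha'⟩ : ℕ) = ((f i) ⟨b, hb'⟩ : ℕ) := by
      simpa [apMor, dif_pos ha', dif_pos hb'] using hab
    have h2 := (f i).injective (Subtype.ext h1)
    exact congrArg Subtype.val h2)

/-- The induced action of a morphism `f : Ω → Ω'` on `E(F_Η)[Ω]`. -/
def Emap {r : ℕ} (F : Species r) {Ω Ω' : Obj r} (f : Mor Ω Ω')
    (s : Finset (ℕ × Obj r)) : Finset (ℕ × Obj r) :=
  s.image (fun p =>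
    if h : oSub p.2 Ω then (F.map (restrictMor f h) p.1, oImage f p.2) else p)

section ObjLattice

variable {A B : Obj r}

@[simp] lemma oEmpty_eq_bot : oEmpty r = ⊥ := rfl

@[simp] lemma oUnion_eq_sup : oUnion A B = A ⊔ B := rfl

@[simp] lemma oDiff_eq_sdiff : oDiff A B = A \ B := rfl

@[simp] lemma oSub_iff_le : oSub A B ↔ A ≤ B := Iff.rfl

@[simp] lemma oDisj_iff_disjoint : oDisj A B ↔ Disjoint A B := Pi.disjoint_iff.symm

end ObjLattice

lemma Set.encard_union_image_sup {α : Type*} [GeneralizedBooleanAlgebra α] {a : α}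
    (ha : a ≠ ⊥) {S : Set α} (hS : ∀ b ∈ S, Disjoint a b) :
    (S ∪ (a ⊔ ·) '' S).encard = 2 * S.encard := by
  rw [Set.encard_union_eq, Set.InjOn.encard_image, two_mul]
  · intro b hb c hc h
    have h' := congrArg (· \ a) h
    simp only [sup_sdiff_left_self, sdiff_eq_left.2 (hS b hb).symm,
      sdiff_eq_left.2 (hS c hc).symm] at h'
    exact h'
  · refine Set.disjoint_left.2 ?_
    rintro _ hb ⟨c, -, rfl⟩
    exact ha (disjoint_self.1 ((hS _ hb).mono_right le_sup_left))

namespace CompOp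

variable {F : Species r} (E : CompOp F)

def imageProd (A B : Obj r) : Set ℕ :=
  E.η A B '' ((F.obj A : Set ℕ) ×ˢ (F.obj B : Set ℕ))

def splits (Ω : Obj r) (x : ℕ) : Set (Obj r) :=
  {C | C ≤ Ω ∧ x ∈ E.imageProd C (Ω \ C)}

variable {E} {A B C D Ω : Obj r} {p q x : ℕ}

lemma eta_mem_imageProd (hp : p ∈ F.obj A) (hq : q ∈ F.obj B) :
    E.η A B (p, q) ∈ E.imageProd A B :=
  Set.mem_image_of_mem _ ⟨hp, hq⟩

lemma imageProd_subset_obj (h : Disjoint A B) :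
    E.imageProd A B ⊆ (F.obj (A ⊔ B) : Set ℕ) := by
  rintro _ ⟨⟨p, q⟩, ⟨hp, hq⟩, rfl⟩
  exact E.mem_η (oDisj_iff_disjoint.2 h) p hp q hq

/-- Axiom (D1), read on a single composite `η(p, q)`. -/
lemma eta_mem_imageProd_iff (hAB : Disjoint A B) (hCD : Disjoint C D) (hU : A ⊔ B = C ⊔ D)
    (hp : p ∈ F.obj A) (hq : q ∈ F.obj B) :
    E.η A B (p, q) ∈ E.imageProd C D ↔
      p ∈ E.imageProd (A ⊓ C) (A ⊓ D) ∧ q ∈ E.imageProd (B ⊓ C) (B ⊓ D) := by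
  have hD1 : E.imageProd A B ∩ E.imageProd C D =
      E.η A B '' (E.imageProd (A ⊓ C) (A ⊓ D) ×ˢ E.imageProd (B ⊓ C) (B ⊓ D)) :=
    E.D1 (oDisj_iff_disjoint.2 hAB) (oDisj_iff_disjoint.2 hCD) hU
  have hsplit : ∀ {X}, X ≤ C ⊔ D → E.imageProd (X ⊓ C) (X ⊓ D) ⊆ (F.obj X : Set ℕ) := by
    intro X hX
    have h := imageProd_subset_obj (E := E)
      (hCD.mono (inf_le_right : X ⊓ C ≤ C) (inf_le_right : X ⊓ D ≤ D))
    rwa [← inf_sup_left, inf_eq_left.2 hX] at h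
  constructor
  · intro h
    have hmem : E.η A B (p, q) ∈ E.imageProd A B ∩ E.imageProd C D :=
      ⟨eta_mem_imageProd hp hq, h⟩
    rw [hD1] at hmem
    obtain ⟨⟨p', q'⟩, ⟨hp', hq'⟩, heq⟩ := hmem
    obtain ⟨rfl, rfl⟩ := Prod.ext_iff.1 <| E.inj_η (oDisj_iff_disjoint.2 hAB)
      ⟨hsplit (hU ▸ le_sup_left) hp', hsplit (hU ▸ le_sup_right) hq'⟩ ⟨hp, hq⟩ heq
    exact ⟨hp', hq'⟩
  · intro h
    have hmem : E.η A B (p, q) ∈ E.imageProd A B ∩ E.imageProd C D := by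
      rw [hD1]; exact Set.mem_image_of_mem _ h
    exact hmem.2

lemma mem_imageProd_bot_left (he : (F.obj ⊥).Nonempty) (hb : p ∈ F.obj B) :
    p ∈ E.imageProd ⊥ B := by
  obtain ⟨e, he⟩ := he
  have h := ((eta_mem_imageProd_iff (E := E) disjoint_bot_left disjoint_bot_left rfl he hb).1
    (eta_mem_imageProd he hb)).2
  rwa [inf_bot_eq, inf_idem] at h

lemma mem_imageProd_bot_right (he : (F.obj ⊥).Nonempty) (hb : p ∈ F.obj B) :
    p ∈ E.imageProd B ⊥ := by
  obtain ⟨e, he⟩ := he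
  have h := ((eta_mem_imageProd_iff (E := E) disjoint_bot_right disjoint_bot_right rfl hb he).1
    (eta_mem_imageProd hb he)).1
  rwa [inf_bot_eq, inf_idem] at h

lemma mem_splits_eta_iff (hA : A ≤ Ω) (hp : p ∈ F.obj A) (hq : q ∈ F.obj (Ω \ A))
    (hC : C ≤ Ω) :
    C ∈ E.splits Ω (E.η A (Ω \ A) (p, q)) ↔
      A ⊓ C ∈ E.splits A p ∧ C \ A ∈ E.splits (Ω \ A) q := by
  simp only [splits, Set.mem_ofPred_eq, hC, inf_le_left, true_and,
    sdiff_le_sdiff_right hC]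
  rw [eta_mem_imageProd_iff disjoint_sdiff_self_right disjoint_sdiff_self_right
    (by rw [sup_sdiff_cancel_right hA, sup_sdiff_cancel_right hC]) hp hq]
  have h1 : A ⊓ (Ω \ C) = A \ (A ⊓ C) := by
    rw [← inf_sdiff_assoc, inf_eq_left.2 hA, sdiff_inf_self_left]
  have h2 : (Ω \ A) ⊓ C = C \ A := by
    rw [sdiff_inf_right_comm, inf_eq_right.2 hC]
  have h3 : (Ω \ A) ⊓ (Ω \ C) = (Ω \ A) \ (C \ A) := by
    rw [← sdiff_sup, sdiff_sdiff_left, sup_sdiff_self_right]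
  rw [h1, h2, h3]

end CompOp

section Indecomposable

variable {F : Species r} {E : CompOp F} {A C D Ω : Obj r} {p q x k : ℕ}

lemma ne_bot_of_mem_indec (hp : p ∈ indec F E A) : A ≠ ⊥ := by
  rintro rfl
  simp [indec] at hp

lemma mem_obj_of_mem_indec (hp : p ∈ indec F E A) : p ∈ F.obj A := by
  rw [indec, oEmpty_eq_bot, if_neg (ne_bot_of_mem_indec hp)] at hp
  exact hp.1

lemma notMem_imageProd_of_mem_indec (hp : p ∈ indec F E A) (hCD : Disjoint C D)
    (hC : C ≠ ⊥) (hD : D ≠ ⊥) (hU : C ⊔ D = A) : p ∉ E.imageProd C D := by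
  rw [indec, oEmpty_eq_bot, if_neg (ne_bot_of_mem_indec hp)] at hp
  simp only [Set.mem_sdiff, Set.mem_iUnion] at hp
  exact fun h => hp.2 ⟨(C, D), oDisj_iff_disjoint.2 hCD, hC, hD, hU, h⟩

lemma CompOp.splits_eq_of_mem_indec (he : (F.obj ⊥).Nonempty) (hp : p ∈ indec F E A) :
    E.splits A p = {⊥, A} := by
  ext C
  constructor
  · rintro ⟨hC, hmem⟩
    by_contra h
    simp only [Set.mem_insert_iff, Set.mem_singleton_iff, not_or] at h
    exact notMem_imageProd_of_mem_indec hp disjoint_sdiff_self_right h.1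
      (fun hbot => h.2 (le_antisymm hC (sdiff_eq_bot_iff.1 hbot)))
      (sup_sdiff_cancel_right hC) hmem
  · rintro (rfl | rfl)
    · refine ⟨bot_le, ?_⟩
      rw [sdiff_bot]
      exact CompOp.mem_imageProd_bot_left he (mem_obj_of_mem_indec hp)
    · refine ⟨le_rfl, ?_⟩
      rw [sdiff_self]
      exact CompOp.mem_imageProd_bot_right he (mem_obj_of_mem_indec hp)

lemma mem_indecK_zero : x ∈ indecK F E 0 Ω ↔ Ω = ⊥ ∧ x ∈ F.obj ⊥ := by
  by_cases h : Ω = ⊥ <;> simp [indecK, h]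

lemma mem_indecK_succ :
    x ∈ indecK F E (k + 1) Ω ↔ ∃ A ≤ Ω, ∃ p ∈ indec F E A, ∃ q ∈ indecK F E k (Ω \ A),
      E.η A (Ω \ A) (p, q) = x := by
  simp [indecK, and_assoc]

lemma mem_obj_of_mem_indecK (hx : x ∈ indecK F E k Ω) : x ∈ F.obj Ω := by
  induction k generalizing Ω x with
  | zero =>
    obtain ⟨rfl, hx₀⟩ := mem_indecK_zero.1 hx
    exact hx₀
  | succ k ih =>
    obtain ⟨A, hA, p, hp, q, hq, rfl⟩ := mem_indecK_succ.1 hx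
    have h := E.mem_η (oDisj_iff_disjoint.2 disjoint_sdiff_self_right) p
      (mem_obj_of_mem_indec hp) q (ih hq)
    rwa [oUnion_eq_sup, sup_sdiff_cancel_right hA] at h

lemma obj_bot_nonempty_of_mem_indecK (hx : x ∈ indecK F E k Ω) : (F.obj ⊥).Nonempty := by
  induction k generalizing Ω x with
  | zero => exact ⟨x, (mem_indecK_zero.1 hx).2⟩
  | succ k ih =>
    obtain ⟨A, -, p, -, q, hq, -⟩ := mem_indecK_succ.1 hx
    exact ih hq

lemma CompOp.splits_eta_of_mem_indec (he : (F.obj ⊥).Nonempty) (hA : A ≤ Ω)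
    (hp : p ∈ indec F E A) (hq : q ∈ F.obj (Ω \ A)) :
    E.splits Ω (E.η A (Ω \ A) (p, q)) =
      E.splits (Ω \ A) q ∪ (A ⊔ ·) '' E.splits (Ω \ A) q := by
  have hpA := E.splits_eq_of_mem_indec he hp
  have hpF := mem_obj_of_mem_indec hp
  ext C
  constructor
  · intro hC
    rw [CompOp.mem_splits_eta_iff hA hpF hq hC.1, hpA] at hC
    obtain ⟨hAC | hAC, hCA⟩ := hC
    · left
      rwa [sdiff_eq_left.2 (disjoint_iff.2 hAC).symm] at hCA
    · exact Or.inr ⟨C \ A, hCA, sup_sdiff_cancel_right (inf_eq_left.1 hAC)⟩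
  · rintro (hC | ⟨B, hB, rfl⟩)
    · have hAC : Disjoint A C := disjoint_sdiff_self_right.mono_right hC.1
      rw [CompOp.mem_splits_eta_iff hA hpF hq (hC.1.trans sdiff_le), hpA,
        disjoint_iff.1 hAC, sdiff_eq_left.2 hAC.symm]
      exact ⟨Or.inl rfl, hC⟩
    · have hAB : Disjoint A B := disjoint_sdiff_self_right.mono_right hB.1
      rw [CompOp.mem_splits_eta_iff hA hpF hq (sup_le hA (hB.1.trans sdiff_le)), hpA,
        inf_sup_self, sup_sdiff_left_self, sdiff_eq_left.2 hAB.symm]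
      exact ⟨Or.inr rfl, hB⟩

lemma encard_splits_of_mem_indecK (hx : x ∈ indecK F E k Ω) : (E.splits Ω x).encard = 2 ^ k := by
  induction k generalizing Ω x with
  | zero =>
    obtain ⟨rfl, hx₀⟩ := mem_indecK_zero.1 hx
    have h : E.splits ⊥ x = {⊥} := by
      ext C
      simp only [CompOp.splits, Set.mem_ofPred_eq, le_bot_iff, Set.mem_singleton_iff,
        and_iff_left_iff_imp]
      rintro rfl
      rw [sdiff_bot]
      exact CompOp.mem_imageProd_bot_left ⟨x, hx₀⟩ hx₀
    rw [h, Set.encard_singleton, pow_zero]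
  | succ k ih =>
    obtain ⟨A, hA, p, hp, q, hq, rfl⟩ := mem_indecK_succ.1 hx
    rw [E.splits_eta_of_mem_indec (obj_bot_nonempty_of_mem_indecK hq) hA hp
        (mem_obj_of_mem_indecK hq),
      Set.encard_union_image_sup (ne_bot_of_mem_indec hp)
        (fun B hB => disjoint_sdiff_self_right.mono_right hB.1),
      ih hq, pow_succ, mul_comm]

end Indecomposable

theorem stmt15_general {r : ℕ} (F : Species r) (E : CompOp F)
    (k ℓ : ℕ) (hkℓ : k ≠ ℓ) (Ω : Obj r) :
    indecK F E k Ω ∩ indecK F E ℓ Ω = ∅ := by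
  refine Set.eq_empty_of_forall_notMem fun x ⟨hk, hℓ⟩ => hkℓ ?_
  have h := (encard_splits_of_mem_indecK hk).symm.trans (encard_splits_of_mem_indecK hℓ)
  exact Nat.pow_right_injective le_rfl (by exact_mod_cast h)

/-- For `k ≠ ℓ`, the sets `F_Η^(k)[Ω]` and `F_Η^(ℓ)[Ω]` are disjoint. -/
theorem stmt15 {r : ℕ} (hr : 0 < r) (F : Species r) (E : CompOp F)
    (hF : ∃ Ω : Obj r, (F.obj Ω).Nonempty)
    (k ℓ : ℕ) (hkℓ : k ≠ ℓ) (Ω : Obj r) :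
    indecK F E k Ω ∩ indecK F E ℓ Ω = ∅ :=
  stmt15_general F E k ℓ hkℓ Ω

end
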